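/- arXiv:1509.07204 — 2 statements merged into one kernel-verified Lean document; each statement's English description precedes it below -/
import Mathlib

section
/- Bisimulation invariance of modal inclusion logic: every MINC-formula φ is invariant under team k-bisimulation for k = md(φ); that is, if K,T ⊨ φ and K,T [⇄_k] K',T', then K',T' ⊨ φ. -/
/-!
Induction on the formula, transporting each team-semantic witness along the bisimulation.
A split `T = T₁ ∪ T₂` induces the split of `T'` into the worlds `k`-bisimilar to some world
of `T₁`, resp. of `T₂`; a successor team `S` of `T` induces the set of `R'`-successors of `T'`
that are `k`-bisimilar to some world of `S`. Inclusion atoms only compare the truth values of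
ML-formulas of depth at most `k` at single worlds, and these are preserved by `k`-bisimilarity.
-/

namespace TeamSem

structure KripkeModel (Φ : Type) where
  W : Type
  R : W → W → Prop
  V : Φ → Set W

variable {Φ : Type}

/-- Image `R[T]` of a team under the accessibility relation. -/
def img (K : KripkeModel Φ) (T : Set K.W) : Set K.W := {v | ∃ w ∈ T, K.R w v}

/-- Preimage `R⁻¹[S]`. -/
def preimg (K : KripkeModel Φ) (S : Set K.W) : Set K.W := {w | ∃ v ∈ S, K.R w v}

/-- `T[R]S` : `S ⊆ R[T]` and `T ⊆ R⁻¹[S]`. -/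
def relStep (K : KripkeModel Φ) (T S : Set K.W) : Prop :=
  S ⊆ img K T ∧ T ⊆ preimg K S

/-- ML formulas in negation normal form. -/
inductive MLFormula (Φ : Type) where
  | atom : Φ → MLFormula Φ
  | natom : Φ → MLFormula Φ
  | and : MLFormula Φ → MLFormula Φ → MLFormula Φ
  | or : MLFormula Φ → MLFormula Φ → MLFormula Φ
  | dia : MLFormula Φ → MLFormula Φ
  | box : MLFormula Φ → MLFormula Φ

/-- Lax team semantics for ML. -/
def mlSat (K : KripkeModel Φ) : MLFormula Φ → Set K.W → Prop
  | .atom p, T => T ⊆ K.V p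
  | .natom p, T => T ∩ K.V p = ∅
  | .and φ ψ, T => mlSat K φ T ∧ mlSat K ψ T
  | .or φ ψ, T => ∃ T₁ T₂, T = T₁ ∪ T₂ ∧ mlSat K φ T₁ ∧ mlSat K ψ T₂
  | .dia φ, T => ∃ S, relStep K T S ∧ mlSat K φ S
  | .box φ, T => mlSat K φ (img K T)

/-- Standard single-world Kripke semantics for ML. -/
def mlSatW (K : KripkeModel Φ) : MLFormula Φ → K.W → Prop
  | .atom p, w => w ∈ K.V p
  | .natom p, w => w ∉ K.V p
  | .and φ ψ, w => mlSatW K φ w ∧ mlSatW K ψ w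
  | .or φ ψ, w => mlSatW K φ w ∨ mlSatW K ψ w
  | .dia φ, w => ∃ v, K.R w v ∧ mlSatW K φ v
  | .box φ, w => ∀ v, K.R w v → mlSatW K φ v

/-- Modal depth of an ML formula. -/
def mlMd : MLFormula Φ → ℕ
  | .atom _ => 0
  | .natom _ => 0
  | .and φ ψ => max (mlMd φ) (mlMd ψ)
  | .or φ ψ => max (mlMd φ) (mlMd ψ)
  | .dia φ => mlMd φ + 1
  | .box φ => mlMd φ + 1

/-- `k`-bisimulation between pointed Kripke models. -/
def bisim (K K' : KripkeModel Φ) : ℕ → K.W → K'.W → Prop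
  | 0, w, w' => ∀ p, w ∈ K.V p ↔ w' ∈ K'.V p
  | k + 1, w, w' => (∀ p, w ∈ K.V p ↔ w' ∈ K'.V p) ∧
      (∀ v, K.R w v → ∃ v', K'.R w' v' ∧ bisim K K' k v v') ∧
      (∀ v', K'.R w' v' → ∃ v, K.R w v ∧ bisim K K' k v v')

/-- Team `k`-bisimilarity: domain and range totality. -/
def teamBisim (K K' : KripkeModel Φ) (k : ℕ) (T : Set K.W) (T' : Set K'.W) : Prop :=
  (∀ w ∈ T, ∃ w' ∈ T', bisim K K' k w w') ∧
  (∀ w' ∈ T', ∃ w ∈ T, bisim K K' k w w')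

/-- Formulas of modal inclusion logic MINC. -/
inductive MINCFormula (Φ : Type) where
  | atom : Φ → MINCFormula Φ
  | natom : Φ → MINCFormula Φ
  | and : MINCFormula Φ → MINCFormula Φ → MINCFormula Φ
  | or : MINCFormula Φ → MINCFormula Φ → MINCFormula Φ
  | dia : MINCFormula Φ → MINCFormula Φ
  | box : MINCFormula Φ → MINCFormula Φ
  | inc : List (MLFormula Φ) → List (MLFormula Φ) → MINCFormula Φ

/-- Team semantics for MINC. -/
def mincSat (K : KripkeModel Φ) : MINCFormula Φ → Set K.W → Prop
  | .atom p, T => T ⊆ K.V p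
  | .natom p, T => T ∩ K.V p = ∅
  | .and φ ψ, T => mincSat K φ T ∧ mincSat K ψ T
  | .or φ ψ, T => ∃ T₁ T₂, T = T₁ ∪ T₂ ∧ mincSat K φ T₁ ∧ mincSat K ψ T₂
  | .dia φ, T => ∃ S, relStep K T S ∧ mincSat K φ S
  | .box φ, T => mincSat K φ (img K T)
  | .inc φs ψs, T => ∀ w ∈ T, ∃ v ∈ T,
      ∀ pr ∈ φs.zip ψs, (mlSatW K pr.1 w ↔ mlSatW K pr.2 v)

/-- Modal depth of a MINC formula. -/
def mincMd : MINCFormula Φ → ℕ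
  | .atom _ => 0
  | .natom _ => 0
  | .and φ ψ => max (mincMd φ) (mincMd ψ)
  | .or φ ψ => max (mincMd φ) (mincMd ψ)
  | .dia φ => mincMd φ + 1
  | .box φ => mincMd φ + 1
  | .inc φs ψs => ((φs ++ ψs).map mlMd).foldr max 0

/-- Formulas of ML(▽), modal logic with the nonemptiness operator. -/
inductive NFormula (Φ : Type) where
  | atom : Φ → NFormula Φ
  | natom : Φ → NFormula Φ
  | and : NFormula Φ → NFormula Φ → NFormula Φ
  | or : NFormula Φ → NFormula Φ → NFormula Φ
  | dia : NFormula Φ → NFormula Φ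
  | box : NFormula Φ → NFormula Φ
  | ne : NFormula Φ → NFormula Φ

/-- Team semantics for ML(▽). -/
def nSat (K : KripkeModel Φ) : NFormula Φ → Set K.W → Prop
  | .atom p, T => T ⊆ K.V p
  | .natom p, T => T ∩ K.V p = ∅
  | .and φ ψ, T => nSat K φ T ∧ nSat K ψ T
  | .or φ ψ, T => ∃ T₁ T₂, T = T₁ ∪ T₂ ∧ nSat K φ T₁ ∧ nSat K ψ T₂
  | .dia φ, T => ∃ S, relStep K T S ∧ nSat K φ S
  | .box φ, T => nSat K φ (img K T)
  | .ne φ, T => T = ∅ ∨ ∃ S, S ⊆ T ∧ S.Nonempty ∧ nSat K φ S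

/-- Modal depth of an ML(▽) formula. -/
def nMd : NFormula Φ → ℕ
  | .atom _ => 0
  | .natom _ => 0
  | .and φ ψ => max (nMd φ) (nMd ψ)
  | .or φ ψ => max (nMd φ) (nMd ψ)
  | .dia φ => nMd φ + 1
  | .box φ => nMd φ + 1
  | .ne φ => nMd φ

/-- Number of occurrences of ▽ in an ML(▽) formula. -/
def nCount : NFormula Φ → ℕ
  | .atom _ => 0
  | .natom _ => 0
  | .and φ ψ => nCount φ + nCount ψ
  | .or φ ψ => nCount φ + nCount ψ
  | .dia φ => nCount φ
  | .box φ => nCount φ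
  | .ne φ => nCount φ + 1

/-- Subformula occurrence at a position (path) in the syntax tree. -/
def subAt : NFormula Φ → List ℕ → Option (NFormula Φ)
  | φ, [] => some φ
  | .and θ _, 0 :: l => subAt θ l
  | .and _ η, 1 :: l => subAt η l
  | .or θ _, 0 :: l => subAt θ l
  | .or _ η, 1 :: l => subAt η l
  | .dia θ, 0 :: l => subAt θ l
  | .box θ, 0 :: l => subAt θ l
  | .ne θ, 0 :: l => subAt θ l
  | _, _ => none

/-- `F` is a winning-strategy labeling of the syntax tree of `φ` for `(K,T)`. -/
def IsWinning (K : KripkeModel Φ) (φ : NFormula Φ) (T : Set K.W)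
    (F : List ℕ → Set K.W) : Prop :=
  F [] = T ∧
  ∀ π ψ, subAt φ π = some ψ →
    match ψ with
    | .atom p => F π ⊆ K.V p
    | .natom p => F π ∩ K.V p = ∅
    | .and _ _ => F π = F (π ++ [0]) ∧ F π = F (π ++ [1])
    | .or _ _ => F π = F (π ++ [0]) ∪ F (π ++ [1])
    | .dia _ => relStep K (F π) (F (π ++ [0]))
    | .box _ => F (π ++ [0]) = img K (F π)
    | .ne _ => F (π ++ [0]) ⊆ F π ∧ (F π ≠ ∅ → F (π ++ [0]) ≠ ∅)

namespace bisim

variable {K K' : KripkeModel Φ} {k : ℕ} {w : K.W} {w' : K'.W}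

theorem mem_V_iff (hb : bisim K K' k w w') (p : Φ) : w ∈ K.V p ↔ w' ∈ K'.V p := by
  cases k with
  | zero => exact hb p
  | succ k => exact hb.1 p

theorem mono {m : ℕ} (hmk : m ≤ k) (hb : bisim K K' k w w') : bisim K K' m w w' := by
  induction m generalizing k w w' with
  | zero => exact hb.mem_V_iff
  | succ m ih =>
    obtain ⟨k, rfl⟩ : ∃ j, k = j + 1 := ⟨k - 1, by omega⟩
    have hmk : m ≤ k := by omega
    refine ⟨hb.1, fun v hv => ?_, fun v' hv' => ?_⟩
    · obtain ⟨v', hv', hbv⟩ := hb.2.1 v hv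
      exact ⟨v', hv', ih hmk hbv⟩
    · obtain ⟨v, hv, hbv⟩ := hb.2.2 v' hv'
      exact ⟨v, hv, ih hmk hbv⟩

end bisim

theorem mlSatW_iff_of_bisim {K K' : KripkeModel Φ} {k : ℕ} {w : K.W} {w' : K'.W}
    (φ : MLFormula Φ) (hφ : mlMd φ ≤ k) (hb : bisim K K' k w w') :
    mlSatW K φ w ↔ mlSatW K' φ w' := by
  induction φ generalizing k w w' with
  | atom p => exact hb.mem_V_iff p
  | natom p => exact not_congr (hb.mem_V_iff p)
  | and φ ψ ihφ ihψ =>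
    rw [mlMd, max_le_iff] at hφ
    exact and_congr (ihφ hφ.1 hb) (ihψ hφ.2 hb)
  | or φ ψ ihφ ihψ =>
    rw [mlMd, max_le_iff] at hφ
    exact or_congr (ihφ hφ.1 hb) (ihψ hφ.2 hb)
  | dia φ ih =>
    obtain ⟨k, rfl⟩ : ∃ j, k = j + 1 := ⟨k - 1, by rw [mlMd] at hφ; omega⟩
    replace hφ : mlMd φ ≤ k := Nat.le_of_succ_le_succ hφ
    constructor
    · rintro ⟨v, hv, hφv⟩
      obtain ⟨v', hv', hbv⟩ := hb.2.1 v hv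
      exact ⟨v', hv', (ih hφ hbv).1 hφv⟩
    · rintro ⟨v', hv', hφv'⟩
      obtain ⟨v, hv, hbv⟩ := hb.2.2 v' hv'
      exact ⟨v, hv, (ih hφ hbv).2 hφv'⟩
  | box φ ih =>
    obtain ⟨k, rfl⟩ : ∃ j, k = j + 1 := ⟨k - 1, by rw [mlMd] at hφ; omega⟩
    replace hφ : mlMd φ ≤ k := Nat.le_of_succ_le_succ hφ
    constructor
    · intro hφw v' hv'
      obtain ⟨v, hv, hbv⟩ := hb.2.2 v' hv'
      exact (ih hφ hbv).1 (hφw v hv)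
    · intro hφw' v hv
      obtain ⟨v', hv', hbv⟩ := hb.2.1 v hv
      exact (ih hφ hbv).2 (hφw' v' hv')

def bisimRestrict (K K' : KripkeModel Φ) (k : ℕ) (S : Set K.W) (T' : Set K'.W) : Set K'.W :=
  {w' ∈ T' | ∃ w ∈ S, bisim K K' k w w'}

theorem teamBisim_bisimRestrict {K K' : KripkeModel Φ} {k : ℕ} {S : Set K.W} {T' : Set K'.W}
    (hS : ∀ w ∈ S, ∃ w' ∈ T', bisim K K' k w w') :
    teamBisim K K' k S (bisimRestrict K K' k S T') := by
  refine ⟨fun w hw => ?_, fun w' hw' => hw'.2⟩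
  obtain ⟨w', hw', hbw⟩ := hS w hw
  exact ⟨w', ⟨hw', w, hw, hbw⟩, hbw⟩

namespace teamBisim

variable {K K' : KripkeModel Φ} {k : ℕ} {T : Set K.W} {T' : Set K'.W}

theorem mono {m : ℕ} (hmk : m ≤ k) (hb : teamBisim K K' k T T') : teamBisim K K' m T T' :=
  ⟨fun w hw => (hb.1 w hw).imp fun _ ⟨hw', hbw⟩ => ⟨hw', hbw.mono hmk⟩,
    fun w' hw' => (hb.2 w' hw').imp fun _ ⟨hw, hbw⟩ => ⟨hw, hbw.mono hmk⟩⟩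

theorem subset_V {p : Φ} (hb : teamBisim K K' k T T') (hT : T ⊆ K.V p) : T' ⊆ K'.V p := by
  intro w' hw'
  obtain ⟨w, hw, hbw⟩ := hb.2 w' hw'
  exact (hbw.mem_V_iff p).1 (hT hw)

theorem inter_V_eq_empty {p : Φ} (hb : teamBisim K K' k T T') (hT : T ∩ K.V p = ∅) :
    T' ∩ K'.V p = ∅ := by
  rw [Set.eq_empty_iff_forall_notMem] at hT ⊢
  rintro w' ⟨hw', hpw'⟩
  obtain ⟨w, hw, hbw⟩ := hb.2 w' hw'
  exact hT w ⟨hw, (hbw.mem_V_iff p).2 hpw'⟩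

theorem exists_union {T₁ T₂ : Set K.W} (hb : teamBisim K K' k (T₁ ∪ T₂) T') :
    ∃ T₁' T₂', T' = T₁' ∪ T₂' ∧ teamBisim K K' k T₁ T₁' ∧ teamBisim K K' k T₂ T₂' := by
  refine ⟨bisimRestrict K K' k T₁ T', bisimRestrict K K' k T₂ T', ?_,
    teamBisim_bisimRestrict fun w hw => hb.1 w (.inl hw),
    teamBisim_bisimRestrict fun w hw => hb.1 w (.inr hw)⟩
  refine Set.Subset.antisymm (fun w' hw' => ?_)
    (Set.union_subset (fun _ h => h.1) fun _ h => h.1)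
  obtain ⟨w, hw | hw, hbw⟩ := hb.2 w' hw'
  · exact .inl ⟨hw', w, hw, hbw⟩
  · exact .inr ⟨hw', w, hw, hbw⟩

theorem img (hb : teamBisim K K' (k + 1) T T') : teamBisim K K' k (img K T) (img K' T') := by
  constructor
  · rintro v ⟨w, hw, hv⟩
    obtain ⟨w', hw', hbw⟩ := hb.1 w hw
    obtain ⟨v', hv', hbv⟩ := hbw.2.1 v hv
    exact ⟨v', ⟨w', hw', hv'⟩, hbv⟩
  · rintro v' ⟨w', hw', hv'⟩
    obtain ⟨w, hw, hbw⟩ := hb.2 w' hw'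
    obtain ⟨v, hv, hbv⟩ := hbw.2.2 v' hv'
    exact ⟨v, ⟨w, hw, hv⟩, hbv⟩

theorem exists_relStep {S : Set K.W} (hb : teamBisim K K' (k + 1) T T') (hS : relStep K T S) :
    ∃ S', relStep K' T' S' ∧ teamBisim K K' k S S' := by
  refine ⟨bisimRestrict K K' k S (TeamSem.img K' T'), ⟨fun _ h => h.1, fun w' hw' => ?_⟩,
    teamBisim_bisimRestrict fun v hv => hb.img.1 v (hS.1 hv)⟩
  obtain ⟨w, hw, hbw⟩ := hb.2 w' hw'
  obtain ⟨v, hvS, hv⟩ := hS.2 hw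
  obtain ⟨v', hv', hbv⟩ := hbw.2.1 v hv
  exact ⟨v', ⟨⟨w', hw', hv'⟩, v, hvS, hbv⟩, hv'⟩

theorem mincSat_inc {φs ψs : List (MLFormula Φ)}
    (hb : teamBisim K K' (mincMd (.inc φs ψs)) T T') (h : mincSat K (.inc φs ψs) T) :
    mincSat K' (.inc φs ψs) T' := by
  have hmd {χ : MLFormula Φ} (hχ : χ ∈ φs ++ ψs) : mlMd χ ≤ mincMd (.inc φs ψs) :=
    List.le_max_of_le' 0 (List.mem_map_of_mem hχ) le_rfl
  intro w' hw'
  obtain ⟨w, hw, hbw⟩ := hb.2 w' hw'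
  obtain ⟨v, hv, hwv⟩ := h w hw
  obtain ⟨v', hv', hbv⟩ := hb.1 v hv
  refine ⟨v', hv', fun pr hpr => ?_⟩
  obtain ⟨hφ, hψ⟩ := List.of_mem_zip hpr
  calc mlSatW K' pr.1 w'
      ↔ mlSatW K pr.1 w := (mlSatW_iff_of_bisim _ (hmd (List.mem_append_left _ hφ)) hbw).symm
    _ ↔ mlSatW K pr.2 v := hwv pr hpr
    _ ↔ mlSatW K' pr.2 v' := mlSatW_iff_of_bisim _ (hmd (List.mem_append_right _ hψ)) hbv

end teamBisim

/-- Bisimulation invariance of modal inclusion logic. -/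
theorem minc_bisim_invariant (φ : MINCFormula Φ) (K K' : KripkeModel Φ)
    (T : Set K.W) (T' : Set K'.W)
    (h : mincSat K φ T) (hb : teamBisim K K' (mincMd φ) T T') :
    mincSat K' φ T' := by
  induction φ generalizing T T' with
  | atom p => exact hb.subset_V h
  | natom p => exact hb.inter_V_eq_empty h
  | and φ ψ ihφ ihψ =>
    exact ⟨ihφ _ _ h.1 (hb.mono (le_max_left _ _)), ihψ _ _ h.2 (hb.mono (le_max_right _ _))⟩
  | or φ ψ ihφ ihψ =>
    obtain ⟨T₁, T₂, rfl, h₁, h₂⟩ := h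
    obtain ⟨T₁', T₂', rfl, hb₁, hb₂⟩ := hb.exists_union
    exact ⟨T₁', T₂', rfl, ihφ _ _ h₁ (hb₁.mono (le_max_left _ _)),
      ihψ _ _ h₂ (hb₂.mono (le_max_right _ _))⟩
  | dia φ ih =>
    obtain ⟨S, hS, hφS⟩ := h
    obtain ⟨S', hS', hbS⟩ := hb.exists_relStep hS
    exact ⟨S', hS', ih _ _ hφS hbS⟩
  | box φ ih => exact ih _ _ h hb.img
  | inc φs ψs => exact hb.mincSat_inc h

end TeamSem
end

section
/- Team-bisimilarity definability in MINC: for every finite Φ, k ∈ ℕ, and pair (K,T), there is a MINC(Φ)-formula ψ^k_{K,T} such that for all (K',T'): K',T' ⊨ ψ^k_{K,T} if and only if K,T [⇄_k] K',T' or T' = ∅. (For T ≠ ∅ the formula η^k_{K,T} ∧ ⋀_{u,v∈T} (χ^k_{K,u} ⊆ χ^k_{K,v}) works, where η^k_{K,T} = ⋁_{w∈T} χ^k_{K,w}.) -/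
namespace TeamSem

variable {Φ : Type}

/-! The `k`-bisimilarity class of a world is determined by its `k`-type: its label together with
the set of `(k-1)`-types of its successors. There are finitely many `k`-types, and each type `t`
has a characteristic ML formula `χ_t`. So `K,T [⇄_k] K',T'` says exactly that `T` and `T'`
realise the same finite set `Θ` of `k`-types. The formula `⋁_{t ∈ Θ} χ_t` says that `T'`
realises only types in `Θ`, and the inclusion atoms `χ_t ⊆ χ_u` (`t, u ∈ Θ`) say that once some
`t ∈ Θ` is realised in `T'`, so is every `u ∈ Θ`; together they hold iff `T'` realises exactly
`Θ` or is empty. This is the paper's `η ∧ ⋀ (χ_u ⊆ χ_v)` with the worlds of `T` grouped by type,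
which keeps the formula finite when `T` is infinite. -/

theorem _root_.Set.image_eq_image_iff {α β γ : Type*} {f : α → γ} {g : β → γ} {s : Set α}
    {t : Set β} :
    f '' s = g '' t ↔ (∀ a ∈ s, ∃ b ∈ t, f a = g b) ∧ ∀ b ∈ t, ∃ a ∈ s, f a = g b := by
  simp only [Set.ext_iff, Set.mem_image]
  constructor
  · intro h
    refine ⟨fun a ha => ?_, fun b hb => ?_⟩
    · obtain ⟨b, hb, hba⟩ := (h (f a)).1 ⟨a, ha, rfl⟩
      exact ⟨b, hb, hba.symm⟩
    · exact (h (g b)).2 ⟨b, hb, rfl⟩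
  · rintro ⟨hst, hts⟩ c
    constructor
    · rintro ⟨a, ha, rfl⟩
      obtain ⟨b, hb, hab⟩ := hst a ha
      exact ⟨b, hb, hab.symm⟩
    · rintro ⟨b, hb, rfl⟩
      exact hts b hb

theorem _root_.Set.image_eq_or_eq_empty_iff {α β : Type*} {f : α → β} {s : Set α} {Θ : Set β} :
    f '' s = Θ ∨ s = ∅ ↔
      (∀ a ∈ s, f a ∈ Θ) ∧ ∀ tu ∈ Θ ×ˢ Θ, ∀ a ∈ s, ∃ b ∈ s, (f a = tu.1 ↔ f b = tu.2) := by
  constructor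
  · rintro (rfl | rfl)
    · refine ⟨fun a ha => Set.mem_image_of_mem f ha, ?_⟩
      rintro ⟨-, -⟩ ⟨⟨c, hc, rfl⟩, ⟨d, hd, rfl⟩⟩ a ha
      by_cases htu : f c = f d
      · exact ⟨a, ha, by rw [htu]⟩
      by_cases hat : f a = f c
      · exact ⟨d, hd, iff_of_true hat rfl⟩
      · exact ⟨c, hc, iff_of_false hat htu⟩
    · simp
  · rintro ⟨hmaps, hinc⟩
    refine s.eq_empty_or_nonempty.symm.imp (fun ⟨a₀, ha₀⟩ => ?_) id
    refine Set.Subset.antisymm (Set.image_subset_iff.2 hmaps) fun u hu => ?_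
    obtain ⟨b, hb, hab⟩ := hinc (f a₀, u) ⟨hmaps a₀ ha₀, hu⟩ a₀ ha₀
    exact ⟨b, hb, hab.1 rfl⟩

noncomputable def _root_.Set.enum {α : Type*} [Finite α] (s : Set α) : List α :=
  s.toFinite.toFinset.toList

@[simp]
theorem _root_.Set.mem_enum {α : Type*} [Finite α] {s : Set α} {a : α} : a ∈ s.enum ↔ a ∈ s := by
  simp [Set.enum]

namespace KripkeModel

def label (K : KripkeModel Φ) (w : K.W) : Set Φ := {p | w ∈ K.V p}

theorem label_eq_label_iff (K K' : KripkeModel Φ) (w : K.W) (w' : K'.W) :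
    K.label w = K'.label w' ↔ ∀ p, w ∈ K.V p ↔ w' ∈ K'.V p :=
  Set.ext_iff

end KripkeModel

theorem bisim_succ_iff (K K' : KripkeModel Φ) (k : ℕ) (w : K.W) (w' : K'.W) :
    bisim K K' (k + 1) w w' ↔
      K.label w = K'.label w' ∧ teamBisim K K' k {v | K.R w v} {v' | K'.R w' v'} := by
  rw [KripkeModel.label_eq_label_iff]
  rfl

def HintikkaType (Φ : Type) : ℕ → Type
  | 0 => Set Φ
  | k + 1 => Set Φ × Set (HintikkaType Φ k)

instance instFiniteHintikkaType [Finite Φ] : (k : ℕ) → Finite (HintikkaType Φ k)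
  | 0 => inferInstanceAs (Finite (Set Φ))
  | k + 1 =>
    haveI := instFiniteHintikkaType k
    inferInstanceAs (Finite (Set Φ × Set (HintikkaType Φ k)))

def typeOf (K : KripkeModel Φ) : (k : ℕ) → K.W → HintikkaType Φ k
  | 0, w => K.label w
  | k + 1, w => ((K.label w, typeOf K k '' {v | K.R w v}) : Set Φ × Set (HintikkaType Φ k))

theorem typeOf_succ_eq_iff (K : KripkeModel Φ) (k : ℕ) (w : K.W) (A : Set Φ)
    (B : Set (HintikkaType Φ k)) :
    typeOf K (k + 1) w = ((A, B) : Set Φ × Set (HintikkaType Φ k)) ↔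
      K.label w = A ∧ typeOf K k '' {v | K.R w v} = B :=
  Prod.ext_iff

theorem typeOf_eq_iff_bisim (K K' : KripkeModel Φ) :
    ∀ (k : ℕ) (w : K.W) (w' : K'.W), typeOf K k w = typeOf K' k w' ↔ bisim K K' k w w'
  | 0, w, w' => KripkeModel.label_eq_label_iff K K' w w'
  | k + 1, w, w' => by
    simp only [bisim_succ_iff, teamBisim, ← typeOf_eq_iff_bisim K K' k, ← Set.image_eq_image_iff]
    exact Prod.ext_iff

theorem teamBisim_iff_image_typeOf_eq (K K' : KripkeModel Φ) (k : ℕ) (T : Set K.W)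
    (T' : Set K'.W) : teamBisim K K' k T T' ↔ typeOf K k '' T = typeOf K' k '' T' := by
  simp only [Set.image_eq_image_iff, typeOf_eq_iff_bisim, teamBisim]

namespace MLFormula

/-- Negation normal form has no constants, so `⊤` and `⊥` need some atom. -/
noncomputable def top [Nonempty Φ] : MLFormula Φ :=
  .or (.atom (Classical.arbitrary Φ)) (.natom (Classical.arbitrary Φ))

noncomputable def bot [Nonempty Φ] : MLFormula Φ :=
  .and (.atom (Classical.arbitrary Φ)) (.natom (Classical.arbitrary Φ))

noncomputable def conj [Nonempty Φ] : List (MLFormula Φ) → MLFormula Φ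
  | [] => top
  | φ :: L => .and φ (conj L)

noncomputable def disj [Nonempty Φ] : List (MLFormula Φ) → MLFormula Φ
  | [] => bot
  | φ :: L => .or φ (disj L)

end MLFormula

section Connectives

variable [Nonempty Φ] (K : KripkeModel Φ) (w : K.W)

theorem mlSatW_top : mlSatW K .top w :=
  em _

theorem not_mlSatW_bot : ¬ mlSatW K .bot w :=
  fun h => h.2 h.1

theorem mlSatW_conj (L : List (MLFormula Φ)) :
    mlSatW K (.conj L) w ↔ ∀ φ ∈ L, mlSatW K φ w := by
  induction L with
  | nil => simpa [MLFormula.conj] using mlSatW_top K w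
  | cons φ L ih => simp [MLFormula.conj, mlSatW, ih]

theorem mlSatW_disj (L : List (MLFormula Φ)) :
    mlSatW K (.disj L) w ↔ ∃ φ ∈ L, mlSatW K φ w := by
  induction L with
  | nil => simpa [MLFormula.disj] using not_mlSatW_bot K w
  | cons φ L ih => simp [MLFormula.disj, mlSatW, ih]

end Connectives

def MLFormula.toMINC : MLFormula Φ → MINCFormula Φ
  | .atom p => .atom p
  | .natom p => .natom p
  | .and φ ψ => .and φ.toMINC ψ.toMINC
  | .or φ ψ => .or φ.toMINC ψ.toMINC
  | .dia φ => .dia φ.toMINC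
  | .box φ => .box φ.toMINC

theorem mincSat_toMINC (K : KripkeModel Φ) (φ : MLFormula Φ) (T : Set K.W) :
    mincSat K φ.toMINC T ↔ ∀ w ∈ T, mlSatW K φ w := by
  induction φ generalizing T with
  | atom p => rfl
  | natom p => simp [MLFormula.toMINC, mincSat, mlSatW, Set.eq_empty_iff_forall_notMem]
  | and φ ψ ihφ ihψ => simp [MLFormula.toMINC, mincSat, mlSatW, ihφ, ihψ, forall_and]
  | or φ ψ ihφ ihψ =>
    simp only [MLFormula.toMINC, mincSat, mlSatW, ihφ, ihψ]
    constructor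
    · rintro ⟨T₁, T₂, rfl, h₁, h₂⟩ w (hw | hw)
      exacts [Or.inl (h₁ w hw), Or.inr (h₂ w hw)]
    · intro h
      refine ⟨{w ∈ T | mlSatW K φ w}, {w ∈ T | mlSatW K ψ w}, ?_, fun w hw => hw.2,
        fun w hw => hw.2⟩
      ext w
      simp only [Set.mem_union, Set.mem_sep_iff, ← and_or_left, iff_self_and]
      exact h w
  | dia φ ih =>
    simp only [MLFormula.toMINC, mincSat, mlSatW, ih]
    constructor
    · rintro ⟨S, ⟨-, hTS⟩, hS⟩ w hw
      obtain ⟨v, hv, hwv⟩ := hTS hw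
      exact ⟨v, hwv, hS v hv⟩
    · intro h
      refine ⟨{v ∈ img K T | mlSatW K φ v}, ⟨fun v hv => hv.1, fun w hw => ?_⟩, fun v hv => hv.2⟩
      obtain ⟨v, hwv, hv⟩ := h w hw
      exact ⟨v, ⟨⟨w, hw, hwv⟩, hv⟩, hwv⟩
  | box φ ih =>
    simp only [MLFormula.toMINC, mincSat, mlSatW, ih, img]
    exact ⟨fun h w hw v hwv => h v ⟨w, hw, hwv⟩, fun h v ⟨w, hw, hwv⟩ => h w hw v hwv⟩

theorem mincSat_inc_singleton (K : KripkeModel Φ) (φ ψ : MLFormula Φ) (T : Set K.W) :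
    mincSat K (.inc [φ] [ψ]) T ↔ ∀ w ∈ T, ∃ v ∈ T, (mlSatW K φ w ↔ mlSatW K ψ v) := by
  simp [mincSat]

def MINCFormula.conj : List (MINCFormula Φ) → MINCFormula Φ
  | [] => .inc [] []
  | φ :: L => .and φ (conj L)

theorem mincSat_conj (K : KripkeModel Φ) (L : List (MINCFormula Φ)) (T : Set K.W) :
    mincSat K (.conj L) T ↔ ∀ φ ∈ L, mincSat K φ T := by
  induction L with
  | nil => simpa [MINCFormula.conj, mincSat] using fun w hw => ⟨w, hw⟩
  | cons φ L ih => simp [MINCFormula.conj, mincSat, ih]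

section Characteristic

variable [Finite Φ] [Nonempty Φ]

noncomputable def literals (A : Set Φ) : MLFormula Φ :=
  .and (.conj (A.enum.map .atom)) (.conj (Aᶜ.enum.map .natom))

theorem mlSatW_literals (K : KripkeModel Φ) (A : Set Φ) (w : K.W) :
    mlSatW K (literals A) w ↔ K.label w = A := by
  simp only [literals, mlSatW, mlSatW_conj, List.forall_mem_map, Set.mem_enum, Set.mem_compl_iff,
    KripkeModel.label, Set.ext_iff, Set.mem_ofPred_eq]
  grind

noncomputable def typeFormula : (k : ℕ) → HintikkaType Φ k → MLFormula Φ
  | 0, A => literals A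
  | k + 1, (A, B) =>
    .and (literals A)
      (.and (.conj (B.enum.map fun s => .dia (typeFormula k s)))
        (.box (.disj (B.enum.map (typeFormula k)))))

theorem mlSatW_typeFormula (K : KripkeModel Φ) :
    ∀ (k : ℕ) (t : HintikkaType Φ k) (w : K.W), mlSatW K (typeFormula k t) w ↔ typeOf K k w = t
  | 0, A, w => mlSatW_literals K A w
  | k + 1, (A, B), w => by
    rw [typeOf_succ_eq_iff, Set.Subset.antisymm_iff (a := _ '' _), Set.image_subset_iff]
    simp only [typeFormula, mlSatW, mlSatW_literals, mlSatW_conj, List.mem_map, Set.mem_enum,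
      forall_exists_index, and_imp, forall_apply_eq_imp_iff₂, mlSatW_typeFormula K k, mlSatW_disj,
      exists_exists_and_eq_and, exists_eq_right']
    exact and_congr_right fun _ => and_comm

noncomputable def typesFormula {k : ℕ} (Θ : Set (HintikkaType Φ k)) : MINCFormula Φ :=
  .and (MLFormula.disj (Θ.enum.map (typeFormula k))).toMINC
    (.conj ((Θ ×ˢ Θ).enum.map fun ts => .inc [typeFormula k ts.1] [typeFormula k ts.2]))

theorem mincSat_typesFormula (K : KripkeModel Φ) {k : ℕ} (Θ : Set (HintikkaType Φ k))
    (T : Set K.W) :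
    mincSat K (typesFormula Θ) T ↔ typeOf K k '' T = Θ ∨ T = ∅ := by
  rw [Set.image_eq_or_eq_empty_iff, typesFormula, mincSat, mincSat_toMINC, mincSat_conj]
  simp only [List.forall_mem_map, mincSat_inc_singleton, mlSatW_disj]
  simp only [Set.mem_enum, mlSatW_typeFormula, List.mem_map, exists_exists_and_eq_and,
    exists_eq_right']

end Characteristic

/-- Team-bisimilarity definability in MINC: there is a MINC formula satisfied by
`(K',T')` exactly when `K,T [⇄_k] K',T'` or `T' = ∅`. -/
theorem teamBisim_definable_minc [Fintype Φ] [Nonempty Φ] (k : ℕ)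
    (K : KripkeModel Φ) (T : Set K.W) :
    ∃ ψ : MINCFormula Φ,
      ∀ (K' : KripkeModel Φ) (T' : Set K'.W),
        mincSat K' ψ T' ↔ (teamBisim K K' k T T' ∨ T' = ∅) :=
  ⟨typesFormula (typeOf K k '' T), fun K' T' => by
    rw [mincSat_typesFormula, teamBisim_iff_image_typeOf_eq, eq_comm]⟩

end TeamSem
end
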